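/- Let n ≥ 2, let λ be a partition with at most n−1 parts, and let b be any filling of the Young diagram of λ with entries in {1,…,n} whose columns are strictly increasing. Then the output greedy(ord(b)) of the Greedy algorithm applied to the reordered filling ord(b) is an admissible subset of the λ-chain Γ, i.e. greedy(ord(b)) ∈ A(λ). -/

import Mathlib

open Equiv

/-- The number of inversions of a permutation of `Fin n`; this equals the Coxeter length. -/
def invNum {n : ℕ} (w : Perm (Fin n)) : ℕ :=
  (Finset.univ.filter (fun p : Fin n × Fin n => p.1 < p.2 ∧ w p.2 < w p.1)).card

/-- `c` lies strictly between `b` and `d` in the circular order `≺_b` starting at `b`. -/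
def circBetween {n : ℕ} (b c d : Fin n) : Prop :=
  0 < ((c - b : Fin n) : ℕ) ∧ ((c - b : Fin n) : ℕ) < ((d - b : Fin n) : ℕ)

instance {n : ℕ} (b c d : Fin n) : Decidable (circBetween b c d) := by
  unfold circBetween; infer_instance

/-- Interpret a natural number as an element of `Fin n` (values used are always `< n`). -/
def finOf (n : ℕ) [NeZero n] (a : ℕ) : Fin n :=
  ⟨a % n, Nat.mod_lt _ (Nat.pos_of_ne_zero (NeZero.ne n))⟩

/-- The transposition of `Fin n` associated to a pair of (0-indexed) positions. -/
def transp (n : ℕ) [NeZero n] (p : ℕ × ℕ) : Perm (Fin n) :=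
  Equiv.swap (finOf n p.1) (finOf n p.2)

/-- The chain `Γ(k)`, in 0-indexed coordinates: the pairs `(i,m)` with `i` running from
`k-1` down to `0` and, for each `i`, `m` running from `k` to `n-1`.  (In the 1-indexed
notation of the paper this is `((k,k+1),…,(k,n),(k−1,k+1),…,(k−1,n),…,(1,k+1),…,(1,n))`.) -/
def GammaK (n k : ℕ) : List (ℕ × ℕ) :=
  (List.range k).reverse.flatMap (fun i => (List.range (n - k)).map (fun t => (i, k + t)))

/-- The `λ`-chain `Γ = Γ(λ'_1)⋯Γ(λ'_{λ_1})`, where `mu = (λ'_1, λ'_2, …)` is the list of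
column heights of `λ` (the conjugate partition). -/
def lambdaChain (n : ℕ) (mu : List ℕ) : List (ℕ × ℕ) :=
  mu.flatMap (GammaK n)

/-- Edge `w → w·(l,m)` of the quantum Bruhat graph `QBG(S_n)`:
`ℓ(w(l,m)) = ℓ(w) + 1` or `ℓ(w(l,m)) = ℓ(w) − 2(m−l) + 1`. -/
def qbgEdge (n : ℕ) [NeZero n] (w : Perm (Fin n)) (p : ℕ × ℕ) : Prop :=
  (invNum (w * transp n p) : ℤ) = (invNum w : ℤ) + 1 ∨
  (invNum (w * transp n p) : ℤ) = (invNum w : ℤ) - 2 * ((p.2 : ℤ) - (p.1 : ℤ)) + 1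

/-- `isQBGPath n w T`: starting at `w`, successively multiplying by the transpositions of
`T` always follows edges of the quantum Bruhat graph. -/
def isQBGPath (n : ℕ) [NeZero n] : Perm (Fin n) → List (ℕ × ℕ) → Prop
  | _, [] => True
  | w, p :: rest => qbgEdge n w p ∧ isQBGPath n (w * transp n p) rest

/-- `J ⊆ {0,…,m−1}` is an admissible subset: its root sequence gives a path in
`QBG(S_n)` starting at the identity. -/
def admissible (n : ℕ) [NeZero n] (mu : List ℕ) (J : Finset ℕ) : Prop :=
  (∀ j ∈ J, j < (lambdaChain n mu).length) ∧
  isQBGPath n 1 ((J.sort (· ≤ ·)).map (fun j => (lambdaChain n mu).getD j (0, 0)))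

/-- Number of positions of `Γ` lying in the first `i` segments `Γ_1,…,Γ_i`. -/
def offset (n : ℕ) (mu : List ℕ) (i : ℕ) : ℕ :=
  ((mu.take i).map (fun k => (GammaK n k).length)).sum

/-- The permutation `π` obtained as the left-to-right product of the transpositions of
`Γ` at the positions of `J` that are `< p`. -/
def permUpTo (n : ℕ) [NeZero n] (mu : List ℕ) (J : Finset ℕ) (p : ℕ) : Perm (Fin n) :=
  (((J.sort (· ≤ ·)).filter (fun j => j < p)).map
    (fun j => transp n ((lambdaChain n mu).getD j (0, 0)))).prod

/-- The `i`-th column of `fill(J)`: `C_i = (π_i(1),…,π_i(λ'_i))`. -/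
def fillCol (n : ℕ) [NeZero n] (mu : List ℕ) (J : Finset ℕ) (i : ℕ) : List (Fin n) :=
  ((List.finRange n).take (mu.getD i 0)).map
    (fun a => permUpTo n mu J (offset n mu (i + 1)) a)

/-- The filling map: `fill(J) = C_1⋯C_{λ_1}`. -/
def fill (n : ℕ) [NeZero n] (mu : List ℕ) (J : Finset ℕ) : List (List (Fin n)) :=
  (List.range mu.length).map (fillCol n mu J)

/-- The sorted filling map: sort each column of `fill(J)` increasingly. -/
def sfill (n : ℕ) [NeZero n] (mu : List ℕ) (J : Finset ℕ) : List (List (Fin n)) :=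
  (fill n mu J).map (List.insertionSort (· ≤ ·))

/-- `b` is a filling of the Young diagram of `λ` (with column heights `mu = λ'`) with
entries in `{1,…,n}` whose columns are strictly increasing from top to bottom. -/
def columnStrict (n : ℕ) (mu : List ℕ) (b : List (List (Fin n))) : Prop :=
  b.length = mu.length ∧
  ∀ i < mu.length, (b.getD i []).length = mu.getD i 0 ∧ (b.getD i []).Chain' (· < ·)

/-- The `≺_a`-minimum of a list (for the circular order starting at `a`). -/
def circMin (n : ℕ) [NeZero n] (a : Fin n) (L : List (Fin n)) : Fin n :=
  (L.argmin (fun x => ((x - a : Fin n) : ℕ))).getD (finOf n 0)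

/-- One column of the Reorder algorithm: given the previous (already reordered) column
and the entries of the current column, pick at each row `j` the `≺_{C_{i−1}(j)}`-minimal
remaining entry. -/
def reorderCol (n : ℕ) [NeZero n] : List (Fin n) → List (Fin n) → List (Fin n)
  | [], avail => avail
  | a :: pr, avail =>
    if avail = [] then []
    else
      let c := circMin n a avail
      c :: reorderCol n pr (avail.erase c)

def ordAux (n : ℕ) [NeZero n] : List (Fin n) → List (List (Fin n)) → List (List (Fin n))
  | _, [] => []
  | prev, bi :: rest =>
    let Ci := reorderCol n prev bi
    Ci :: ordAux n Ci rest

/-- The Reorder algorithm `ord`: `C_1 := b_1` and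
`C_i(j) := min_{≺_{C_{i−1}(j)}}(b_i ∖ {C_i(1),…,C_i(j−1)})`. -/
def ord (n : ℕ) [NeZero n] : List (List (Fin n)) → List (List (Fin n))
  | [] => []
  | b1 :: rest => b1 :: ordAux n b1 rest

/-- `c` satisfies `b ≺ c ⪯ d` in the circular order `≺_b` starting at `b` (equality is
allowed at the top end: in the Greedy algorithm the selected root may bring the entry in
position `l` exactly to its target value `C_i(l)`, i.e. `A(m) = C_i(l)` is allowed). -/
def circWeakBetween {n : ℕ} (b c d : Fin n) : Prop :=
  0 < ((c - b : Fin n) : ℕ) ∧ ((c - b : Fin n) : ℕ) ≤ ((d - b : Fin n) : ℕ)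

instance {n : ℕ} (b c d : Fin n) : Decidable (circWeakBetween b c d) := by
  unfold circWeakBetween; infer_instance

/-- The Greedy algorithm, processing the stream of (current column, root of `Γ`) pairs
while keeping track of the current permutation `A` and the current position in `Γ`;
whenever `A(l) ≠ C_i(l)` and `A(l) ≺ A(m) ⪯ C_i(l)` the current root `(l,m)` is
selected and `A` is replaced by `A·(l,m)`; it returns the set of selected positions
of `Γ`. -/
def greedyAux (n : ℕ) [NeZero n] :
    Perm (Fin n) → ℕ → List (List (Fin n) × (ℕ × ℕ)) → Finset ℕ
  | _, _, [] => ∅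
  | A, pos, (Ci, p) :: rest =>
    if A (finOf n p.1) ≠ Ci.getD p.1 (finOf n 0) ∧
        circWeakBetween (A (finOf n p.1)) (A (finOf n p.2)) (Ci.getD p.1 (finOf n 0)) then
      insert pos (greedyAux n (A * transp n p) (pos + 1) rest)
    else
      greedyAux n A (pos + 1) rest

/-- The stream of (column, root) pairs: the roots of `Γ_i` are paired with column `C_i`. -/
def greedyStream (n : ℕ) (mu : List ℕ) (C : List (List (Fin n))) :
    List (List (Fin n) × (ℕ × ℕ)) :=
  (List.range mu.length).flatMap
    (fun i => (GammaK n (mu.getD i 0)).map (fun p => (C.getD i [], p)))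

/-- The Greedy algorithm: input a filling `C = C_1⋯C_{λ_1}`, output the subset of `Γ`
(as a set of positions) selected by the greedy rule. -/
def greedy (n : ℕ) [NeZero n] (mu : List ℕ) (C : List (List (Fin n))) : Finset ℕ :=
  greedyAux n 1 0 (greedyStream n mu C)



/-! ### Auxiliary: circular distance -/

section DD
variable {n : ℕ} [NeZero n]

/-- circular distance from `y` to `x` (counterclockwise steps from `y` to reach `x`). -/
def dd (x y : Fin n) : ℕ := ((x - y : Fin n) : ℕ)

theorem dd_val (x y : Fin n) :
    (y.val ≤ x.val ∧ dd x y = x.val - y.val) ∨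
    (x.val < y.val ∧ dd x y = n + x.val - y.val) := by
  have hx := x.isLt; have hy := y.isLt
  have hsub : dd x y = (n - ↑y + ↑x) % n := by
    unfold dd; rw [Fin.sub_def]
  rcases le_or_gt y.val x.val with h | h
  · left; refine ⟨h, ?_⟩
    have h1 : n - ↑y + ↑x = n + (x.val - y.val) := by omega
    rw [hsub, h1, Nat.add_mod_left, Nat.mod_eq_of_lt (by omega)]
  · right; refine ⟨h, ?_⟩
    rw [hsub, Nat.mod_eq_of_lt (by omega)]; omega

theorem dd_lt (x y : Fin n) : dd x y < n := by
  have hx := x.isLt; have hy := y.isLt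
  rcases dd_val x y with ⟨h1, h2⟩ | ⟨h1, h2⟩ <;> omega

theorem dd_eq_zero_iff {x y : Fin n} : dd x y = 0 ↔ x = y := by
  have hx := x.isLt; have hy := y.isLt
  rw [Fin.ext_iff]
  rcases dd_val x y with ⟨h1, h2⟩ | ⟨h1, h2⟩ <;> omega

theorem dd_inj {x y a : Fin n} (h : dd x a = dd y a) : x = y := by
  have hx := x.isLt; have hy := y.isLt; have ha := a.isLt
  rw [Fin.ext_iff]
  rcases dd_val x a with ⟨h1, h2⟩ | ⟨h1, h2⟩ <;>
    rcases dd_val y a with ⟨h3, h4⟩ | ⟨h3, h4⟩ <;> omega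

theorem dd_shift {x y a : Fin n} (h : dd y a ≤ dd x a) :
    dd x y = dd x a - dd y a := by
  have hx := x.isLt; have hy := y.isLt; have ha := a.isLt
  rcases dd_val x a with ⟨h1, h2⟩ | ⟨h1, h2⟩ <;>
    rcases dd_val y a with ⟨h3, h4⟩ | ⟨h3, h4⟩ <;>
    rcases dd_val x y with ⟨h5, h6⟩ | ⟨h5, h6⟩ <;> omega

theorem dd_add {x y a : Fin n} (h : dd x y + dd y a < n) :
    dd x a = dd x y + dd y a := by
  have hx := x.isLt; have hy := y.isLt; have ha := a.isLt
  rcases dd_val x a with ⟨h1, h2⟩ | ⟨h1, h2⟩ <;>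
    rcases dd_val y a with ⟨h3, h4⟩ | ⟨h3, h4⟩ <;>
    rcases dd_val x y with ⟨h5, h6⟩ | ⟨h5, h6⟩ <;> omega

theorem dd_add_dd {x y : Fin n} (h : x ≠ y) : dd x y + dd y x = n := by
  have hx := x.isLt; have hy := y.isLt
  have hne : x.val ≠ y.val := fun hv => h (Fin.ext hv)
  rcases dd_val x y with ⟨h1, h2⟩ | ⟨h1, h2⟩ <;>
    rcases dd_val y x with ⟨h3, h4⟩ | ⟨h3, h4⟩ <;> omega

theorem dd_pos {x y : Fin n} (h : x ≠ y) : 0 < dd x y := by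
  rcases Nat.eq_zero_or_pos (dd x y) with h0 | h0
  · exact absurd (dd_eq_zero_iff.mp h0) h
  · exact h0

end DD


/-! ### The quantum Bruhat graph edge criterion -/

section EDGE
variable {n : ℕ} [NeZero n]

theorem card_filter_comp_equiv {α : Type*} [Fintype α] [DecidableEq α] (e : α ≃ α)
    (p : α → Prop) [DecidablePred p] :
    (Finset.univ.filter fun x => p (e x)).card = (Finset.univ.filter p).card := by
  apply Finset.card_bij' (fun x _ => e x) (fun y _ => e.symm y) <;> simp

/-- Key counting identity:
`ℓ(wσ) + 2·#(X ∩ Inv(w)) = ℓ(w) + #X` where `X` is the set of ascents reversed by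
`σ = swap a b`. -/
theorem invNum_mul_swap (w : Perm (Fin n)) (a b : Fin n) :
    invNum (w * Equiv.swap a b) + 2 * (Finset.univ.filter (fun q : Fin n × Fin n =>
      (q.1 < q.2 ∧ Equiv.swap a b q.2 < Equiv.swap a b q.1) ∧ w q.2 < w q.1)).card
    = invNum w + (Finset.univ.filter (fun q : Fin n × Fin n =>
      q.1 < q.2 ∧ Equiv.swap a b q.2 < Equiv.swap a b q.1)).card := by
  set σ := Equiv.swap a b with hσ
  have hinj : Function.Injective σ := σ.injective
  have hwinj : Function.Injective w := w.injective
  -- Step 1: reindex the inversions of w * σ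
  have step1 : invNum (w * σ) = (Finset.univ.filter (fun q : Fin n × Fin n =>
      σ q.1 < σ q.2 ∧ w q.2 < w q.1)).card := by
    unfold invNum
    rw [← card_filter_comp_equiv (Equiv.prodCongr σ σ)
      (fun p : Fin n × Fin n => p.1 < p.2 ∧ (w * σ) p.2 < (w * σ) p.1)]
    refine congrArg Finset.card (Finset.filter_congr ?_)
    intro q _
    simp [Equiv.prodCongr_apply, Equiv.Perm.mul_apply, hσ, Equiv.swap_apply_self]
  -- split the reindexed set along q.1 < q.2
  have split1 : (Finset.univ.filter (fun q : Fin n × Fin n =>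
      σ q.1 < σ q.2 ∧ w q.2 < w q.1)).card
      = (Finset.univ.filter (fun q : Fin n × Fin n =>
        (q.1 < q.2 ∧ ¬ (σ q.2 < σ q.1)) ∧ w q.2 < w q.1)).card
      + (Finset.univ.filter (fun q : Fin n × Fin n =>
        (q.2 < q.1 ∧ σ q.1 < σ q.2) ∧ w q.2 < w q.1)).card := by
    have h := Finset.card_filter_add_card_filter_not
      (s := Finset.univ.filter (fun q : Fin n × Fin n => σ q.1 < σ q.2 ∧ w q.2 < w q.1))
      (p := fun q : Fin n × Fin n => q.1 < q.2)
    rw [Finset.filter_filter, Finset.filter_filter] at h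
    have e1 : Finset.univ.filter (fun q : Fin n × Fin n =>
        (σ q.1 < σ q.2 ∧ w q.2 < w q.1) ∧ q.1 < q.2)
        = Finset.univ.filter (fun q : Fin n × Fin n =>
        (q.1 < q.2 ∧ ¬ (σ q.2 < σ q.1)) ∧ w q.2 < w q.1) := by
      refine Finset.filter_congr ?_
      intro q _
      constructor
      · rintro ⟨⟨hs, hw⟩, hq⟩
        exact ⟨⟨hq, not_lt.mpr (le_of_lt hs)⟩, hw⟩
      · rintro ⟨⟨hq, hs⟩, hw⟩
        have h1 : σ q.1 ≠ σ q.2 := fun h => absurd (hinj h) (ne_of_lt hq)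
        exact ⟨⟨lt_of_le_of_ne (not_lt.mp hs) h1, hw⟩, hq⟩
    have e2 : Finset.univ.filter (fun q : Fin n × Fin n =>
        (σ q.1 < σ q.2 ∧ w q.2 < w q.1) ∧ ¬ q.1 < q.2)
        = Finset.univ.filter (fun q : Fin n × Fin n =>
        (q.2 < q.1 ∧ σ q.1 < σ q.2) ∧ w q.2 < w q.1) := by
      refine Finset.filter_congr ?_
      intro q _
      constructor
      · rintro ⟨⟨hs, hw⟩, hq⟩
        have hne : q.1 ≠ q.2 := fun h => absurd (congrArg w h).symm (ne_of_lt hw)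
        exact ⟨⟨lt_of_le_of_ne (not_lt.mp hq) (Ne.symm hne), hs⟩, hw⟩
      · rintro ⟨⟨hq, hs⟩, hw⟩
        exact ⟨⟨hs, hw⟩, not_lt.mpr (le_of_lt hq)⟩
    rw [e1, e2] at h
    omega
  -- the second summand, via the coordinate swap
  have step3 : (Finset.univ.filter (fun q : Fin n × Fin n =>
        (q.2 < q.1 ∧ σ q.1 < σ q.2) ∧ w q.2 < w q.1)).card
      = (Finset.univ.filter (fun q : Fin n × Fin n =>
        (q.1 < q.2 ∧ σ q.2 < σ q.1) ∧ w q.1 < w q.2)).card := by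
    rw [← card_filter_comp_equiv (Equiv.prodComm (Fin n) (Fin n))
      (fun r : Fin n × Fin n => (r.2 < r.1 ∧ σ r.1 < σ r.2) ∧ w r.2 < w r.1)]
    refine congrArg Finset.card (Finset.filter_congr ?_)
    intro q _
    simp [Equiv.prodComm_apply]
  -- split invNum w along σ-descents
  have split2 : invNum w
      = (Finset.univ.filter (fun q : Fin n × Fin n =>
        (q.1 < q.2 ∧ σ q.2 < σ q.1) ∧ w q.2 < w q.1)).card
      + (Finset.univ.filter (fun q : Fin n × Fin n =>
        (q.1 < q.2 ∧ ¬ (σ q.2 < σ q.1)) ∧ w q.2 < w q.1)).card := by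
    have h := Finset.card_filter_add_card_filter_not
      (s := Finset.univ.filter (fun q : Fin n × Fin n => q.1 < q.2 ∧ w q.2 < w q.1))
      (p := fun q : Fin n × Fin n => σ q.2 < σ q.1)
    rw [Finset.filter_filter, Finset.filter_filter] at h
    have e1 : Finset.univ.filter (fun q : Fin n × Fin n =>
        (q.1 < q.2 ∧ w q.2 < w q.1) ∧ σ q.2 < σ q.1)
        = Finset.univ.filter (fun q : Fin n × Fin n =>
        (q.1 < q.2 ∧ σ q.2 < σ q.1) ∧ w q.2 < w q.1) := by
      refine Finset.filter_congr ?_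
      intro q _
      tauto
    have e2 : Finset.univ.filter (fun q : Fin n × Fin n =>
        (q.1 < q.2 ∧ w q.2 < w q.1) ∧ ¬ σ q.2 < σ q.1)
        = Finset.univ.filter (fun q : Fin n × Fin n =>
        (q.1 < q.2 ∧ ¬ (σ q.2 < σ q.1)) ∧ w q.2 < w q.1) := by
      refine Finset.filter_congr ?_
      intro q _
      tauto
    rw [e1, e2] at h
    unfold invNum
    omega
  -- split #X along w-inversions
  have split3 : (Finset.univ.filter (fun q : Fin n × Fin n =>
        q.1 < q.2 ∧ σ q.2 < σ q.1)).card
      = (Finset.univ.filter (fun q : Fin n × Fin n =>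
        (q.1 < q.2 ∧ σ q.2 < σ q.1) ∧ w q.2 < w q.1)).card
      + (Finset.univ.filter (fun q : Fin n × Fin n =>
        (q.1 < q.2 ∧ σ q.2 < σ q.1) ∧ w q.1 < w q.2)).card := by
    have h := Finset.card_filter_add_card_filter_not
      (s := Finset.univ.filter (fun q : Fin n × Fin n => q.1 < q.2 ∧ σ q.2 < σ q.1))
      (p := fun q : Fin n × Fin n => w q.2 < w q.1)
    rw [Finset.filter_filter, Finset.filter_filter] at h
    have e2 : Finset.univ.filter (fun q : Fin n × Fin n =>
        (q.1 < q.2 ∧ σ q.2 < σ q.1) ∧ ¬ w q.2 < w q.1)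
        = Finset.univ.filter (fun q : Fin n × Fin n =>
        (q.1 < q.2 ∧ σ q.2 < σ q.1) ∧ w q.1 < w q.2) := by
      refine Finset.filter_congr ?_
      intro q _
      constructor
      · rintro ⟨⟨hq, hs⟩, hw⟩
        have hne : w q.1 ≠ w q.2 := fun h => absurd (hwinj h) (ne_of_lt hq)
        exact ⟨⟨hq, hs⟩, lt_of_le_of_ne (not_lt.mp hw) hne⟩
      · rintro ⟨⟨hq, hs⟩, hw⟩
        exact ⟨⟨hq, hs⟩, not_lt.mpr (le_of_lt hw)⟩
    rw [e2] at h
    omega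
  rw [step1, split1, step3]
  omega


theorem finOf_val {n : ℕ} [NeZero n] {k : ℕ} (h : k < n) : (finOf n k).val = k :=
  Nat.mod_eq_of_lt h

theorem finOf_val_eq {n : ℕ} [NeZero n] (x : Fin n) : finOf n x.val = x :=
  Fin.ext (Nat.mod_eq_of_lt x.isLt)

theorem swap_reversal_charac {n : ℕ} {a b : Fin n} (hab : a < b) (q1 q2 : Fin n) :
    (q1 < q2 ∧ Equiv.swap a b q2 < Equiv.swap a b q1)
    ↔ ((q1 = a ∧ q2 = b) ∨ (q1 = a ∧ a < q2 ∧ q2 < b) ∨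
       (q2 = b ∧ a < q1 ∧ q1 < b)) := by
  have hq1 := q1.isLt
  have hq2 := q2.isLt
  have habv : a.val < b.val := hab
  simp only [Equiv.swap_apply_def]
  split_ifs <;> (simp only [Fin.lt_def, Fin.ext_iff] at *) <;> omega

/-- The uniform criterion for an edge of the quantum Bruhat graph: `w → w·t_{lm}` is an
edge as soon as no intermediate position carries a value in the circular interval
`(w(l), w(m)]` based at `w(l)`. -/
theorem qbgEdge_of_crit {n : ℕ} [NeZero n] (w : Perm (Fin n)) (l m : ℕ)
    (hlm : l < m) (hmn : m < n)
    (hcrit : ∀ k, l < k → k < m →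
      dd (w (finOf n m)) (w (finOf n l)) < dd (w (finOf n k)) (w (finOf n l))) :
    qbgEdge n w (l, m) := by
  set a := finOf n l with ha
  set b := finOf n m with hb
  have hav : a.val = l := finOf_val (lt_trans hlm hmn)
  have hbv : b.val = m := finOf_val hmn
  have hab : a < b := by rw [Fin.lt_def, hav, hbv]; exact hlm
  have habne : a ≠ b := ne_of_lt hab
  have key := invNum_mul_swap w a b
  have memX : ∀ q : Fin n × Fin n,
      (q.1 < q.2 ∧ Equiv.swap a b q.2 < Equiv.swap a b q.1)
      ↔ ((q.1 = a ∧ q.2 = b) ∨ (q.1 = a ∧ a < q.2 ∧ q.2 < b) ∨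
         (q.2 = b ∧ a < q.1 ∧ q.1 < b)) :=
    fun q => swap_reversal_charac hab q.1 q.2
  -- the cardinality of X
  have hXcard : (Finset.univ.filter (fun q : Fin n × Fin n =>
      q.1 < q.2 ∧ Equiv.swap a b q.2 < Equiv.swap a b q.1)).card = 2 * (m - l) - 1 := by
    have hX : (Finset.univ.filter (fun q : Fin n × Fin n =>
        q.1 < q.2 ∧ Equiv.swap a b q.2 < Equiv.swap a b q.1))
        = insert ((a, b) : Fin n × Fin n)
          (((Finset.Ioo a b).image fun k => ((a, k) : Fin n × Fin n)) ∪
           ((Finset.Ioo a b).image fun k => ((k, b) : Fin n × Fin n))) := by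
      ext q
      rw [Finset.mem_filter]
      simp only [Finset.mem_univ, true_and, memX q, Finset.mem_insert, Finset.mem_union,
        Finset.mem_image, Finset.mem_Ioo, Prod.ext_iff]
      constructor
      · rintro (⟨e1, e2⟩ | ⟨e1, h3, h4⟩ | ⟨e2, h3, h4⟩)
        · exact Or.inl ⟨e1, e2⟩
        · exact Or.inr (Or.inl ⟨q.2, ⟨h3, h4⟩, e1.symm, rfl⟩)
        · exact Or.inr (Or.inr ⟨q.1, ⟨h3, h4⟩, rfl, e2.symm⟩)
      · rintro (⟨e1, e2⟩ | ⟨k, ⟨h3, h4⟩, e1, e2⟩ | ⟨k, ⟨h3, h4⟩, e1, e2⟩)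
        · exact Or.inl ⟨e1, e2⟩
        · exact Or.inr (Or.inl ⟨e1.symm, e2 ▸ h3, e2 ▸ h4⟩)
        · exact Or.inr (Or.inr ⟨e2.symm, e1 ▸ h3, e1 ▸ h4⟩)
    rw [hX]
    have hdisj : Disjoint ((Finset.Ioo a b).image fun k => ((a, k) : Fin n × Fin n))
        ((Finset.Ioo a b).image fun k => ((k, b) : Fin n × Fin n)) := by
      rw [Finset.disjoint_left]
      rintro q hq1 hq2
      obtain ⟨k, hk, rfl⟩ := Finset.mem_image.mp hq1
      obtain ⟨k', hk', he⟩ := Finset.mem_image.mp hq2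
      rw [Prod.mk.injEq] at he
      rw [Finset.mem_Ioo] at hk'
      exact absurd he.1 (ne_of_gt hk'.1)
    have hnotmem : ((a, b) : Fin n × Fin n) ∉
        (((Finset.Ioo a b).image fun k => ((a, k) : Fin n × Fin n)) ∪
         ((Finset.Ioo a b).image fun k => ((k, b) : Fin n × Fin n))) := by
      rw [Finset.mem_union]
      rintro (h | h) <;> obtain ⟨k, hk, he⟩ := Finset.mem_image.mp h <;>
        rw [Prod.mk.injEq] at he <;> rw [Finset.mem_Ioo] at hk
      · exact absurd (he.2 ▸ hk.2) (lt_irrefl b)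
      · exact absurd (he.1 ▸ hk.1) (lt_irrefl a)
    rw [Finset.card_insert_of_notMem hnotmem, Finset.card_union_of_disjoint hdisj,
      Finset.card_image_of_injective _ (fun x y h => (Prod.ext_iff.mp h).2),
      Finset.card_image_of_injective _ (fun x y h => (Prod.ext_iff.mp h).1),
      Fin.card_Ioo, hav, hbv]
    omega
  have hwne : w a ≠ w b := fun h => habne (w.injective h)
  rcases lt_or_gt_of_ne hwne with hwab | hwab
  · -- Bruhat cover case : w(a) < w(b)
    have hXI : (Finset.univ.filter (fun q : Fin n × Fin n =>
        (q.1 < q.2 ∧ Equiv.swap a b q.2 < Equiv.swap a b q.1) ∧ w q.2 < w q.1)).card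
        = m - l - 1 := by
      have hset : (Finset.univ.filter (fun q : Fin n × Fin n =>
          (q.1 < q.2 ∧ Equiv.swap a b q.2 < Equiv.swap a b q.1) ∧ w q.2 < w q.1))
          = (Finset.Ioo a b).image
            (fun k => if w k < w a then ((a, k) : Fin n × Fin n) else (k, b)) := by
        ext q
        rw [Finset.mem_filter]
        simp only [Finset.mem_univ, true_and, Finset.mem_image, Finset.mem_Ioo]
        constructor
        · rintro ⟨hx, hw⟩
          rcases (memX q).mp hx with ⟨e1, e2⟩ | ⟨e1, h3, h4⟩ | ⟨e2, h3, h4⟩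
          · rw [e1, e2] at hw; exact absurd hw (not_lt.mpr (le_of_lt hwab))
          · refine ⟨q.2, ⟨h3, h4⟩, ?_⟩
            rw [if_pos (e1 ▸ hw), ← e1]
          · refine ⟨q.1, ⟨h3, h4⟩, ?_⟩
            have : ¬ (w q.1 < w a) := by
              rw [e2] at hw
              exact not_lt.mpr (le_of_lt (lt_trans hwab hw))
            rw [if_neg this, ← e2]
        · rintro ⟨k, ⟨h3, h4⟩, he⟩
          have hkl : l < k.val := by rw [← hav]; exact h3
          have hkm : k.val < m := by rw [← hbv]; exact h4
          have hc := hcrit k.val hkl hkm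
          rw [finOf_val_eq] at hc
          have hkne_a : w k ≠ w a := fun h => (ne_of_gt h3) (w.injective h)
          have hkne_b : w k ≠ w b := fun h => (ne_of_lt h4) (w.injective h)
          have hsplit : w k < w a ∨ w b < w k := by
            have hv1 := dd_val (w b) (w a)
            have hv2 := dd_val (w k) (w a)
            have h5 : (w k).val ≠ (w a).val := fun h => hkne_a (Fin.ext h)
            have h6 : (w k).val ≠ (w b).val := fun h => hkne_b (Fin.ext h)
            have h7 : (w a).val < (w b).val := hwab
            have h8 := (w k).isLt
            rw [Fin.lt_def, Fin.lt_def]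
            omega
          rcases hsplit with hcase | hcase
          · rw [if_pos hcase] at he
            subst he
            exact ⟨(memX _).mpr (Or.inr (Or.inl ⟨rfl, h3, h4⟩)), hcase⟩
          · have hnot : ¬ (w k < w a) := by
              intro h
              exact absurd (lt_trans hcase h) (not_lt.mpr (le_of_lt hwab))
            rw [if_neg hnot] at he
            subst he
            exact ⟨(memX _).mpr (Or.inr (Or.inr ⟨rfl, h3, h4⟩)), hcase⟩
      rw [hset]
      rw [Finset.card_image_of_injOn]
      · rw [Fin.card_Ioo, hav, hbv]
      · intro k hk k' hk' he
        rw [Finset.mem_coe, Finset.mem_Ioo] at hk hk'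
        simp only [] at he
        by_cases c1 : w k < w a <;> by_cases c2 : w k' < w a
        · rw [if_pos c1, if_pos c2, Prod.mk.injEq] at he; exact he.2
        · rw [if_pos c1, if_neg c2, Prod.mk.injEq] at he
          exact absurd he.1 (ne_of_lt hk'.1)
        · rw [if_neg c1, if_pos c2, Prod.mk.injEq] at he
          exact absurd he.1 (ne_of_gt hk.1)
        · rw [if_neg c1, if_neg c2, Prod.mk.injEq] at he; exact he.1
    refine Or.inl ?_
    show (invNum (w * Equiv.swap a b) : ℤ) = (invNum w : ℤ) + 1
    rw [hXI, hXcard] at key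
    omega
  · -- quantum edge case : w(b) < w(a)
    have hXI : (Finset.univ.filter (fun q : Fin n × Fin n =>
        (q.1 < q.2 ∧ Equiv.swap a b q.2 < Equiv.swap a b q.1) ∧ w q.2 < w q.1)).card
        = 2 * (m - l) - 1 := by
      rw [← hXcard]
      refine congrArg Finset.card (Finset.filter_congr ?_)
      intro q _
      constructor
      · rintro ⟨hx, _⟩; exact hx
      · intro hx
        refine ⟨hx, ?_⟩
        rcases (memX q).mp hx with ⟨e1, e2⟩ | ⟨e1, h3, h4⟩ | ⟨e2, h3, h4⟩
        · rw [e1, e2]; exact hwab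
        · -- q = (a, k) : show w q.2 < w a
          have hkl : l < q.2.val := by rw [← hav]; exact h3
          have hkm : q.2.val < m := by rw [← hbv]; exact h4
          have hc := hcrit q.2.val hkl hkm
          rw [finOf_val_eq] at hc
          have hkne_a : w q.2 ≠ w a := fun h =>
            (ne_of_gt h3) (w.injective h)
          have hv1 := dd_val (w b) (w a)
          have hv2 := dd_val (w q.2) (w a)
          have h5 : (w q.2).val ≠ (w a).val := fun h => hkne_a (Fin.ext h)
          have h7 : (w b).val < (w a).val := hwab
          have h8 := (w q.2).isLt
          have h9 := (w a).isLt
          rw [e1, Fin.lt_def]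
          omega
        · -- q = (k, b) : show w b < w q.1
          have hkl : l < q.1.val := by rw [← hav]; exact h3
          have hkm : q.1.val < m := by rw [← hbv]; exact h4
          have hc := hcrit q.1.val hkl hkm
          rw [finOf_val_eq] at hc
          have hkne_a : w q.1 ≠ w a := fun h =>
            (ne_of_gt h3) (w.injective h)
          have hv1 := dd_val (w b) (w a)
          have hv2 := dd_val (w q.1) (w a)
          have h5 : (w q.1).val ≠ (w a).val := fun h => hkne_a (Fin.ext h)
          have h7 : (w b).val < (w a).val := hwab
          have h8 := (w q.1).isLt
          have h9 := (w a).isLt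
          rw [e2, Fin.lt_def]
          omega
    refine Or.inr ?_
    show (invNum (w * Equiv.swap a b) : ℤ) = (invNum w : ℤ) - 2 * ((m : ℤ) - (l : ℤ)) + 1
    rw [hXI, hXcard] at key
    have hml : l < m := hlm
    omega

end EDGE



/-! ### Properties of the Reorder algorithm -/

section REORDER
variable {n : ℕ} [NeZero n]

theorem circMin_mem (a : Fin n) {L : List (Fin n)} (h : L ≠ []) : circMin n a L ∈ L := by
  unfold circMin
  cases hM : L.argmin (fun x => ((x - a : Fin n) : ℕ)) with
  | none => exact absurd (List.argmin_eq_none.mp hM) h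
  | some c =>
    simp only [Option.getD_some]
    exact List.argmin_mem (Option.mem_def.mpr hM)

theorem circMin_le (a : Fin n) {L : List (Fin n)} (h : L ≠ []) :
    ∀ y ∈ L, dd (circMin n a L) a ≤ dd y a := by
  intro y hy
  unfold circMin
  cases hM : L.argmin (fun x => ((x - a : Fin n) : ℕ)) with
  | none => exact absurd (List.argmin_eq_none.mp hM) h
  | some c =>
    simp only [Option.getD_some]
    exact List.le_of_mem_argmin hy (Option.mem_def.mpr hM)

theorem circMin_eq {a c : Fin n} {L : List (Fin n)} (hc : c ∈ L)
    (hmin : ∀ y ∈ L, dd c a ≤ dd y a) : circMin n a L = c := by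
  have hne : L ≠ [] := List.ne_nil_of_mem hc
  have h1 := circMin_le a hne c hc
  have h2 := hmin _ (circMin_mem a hne)
  exact dd_inj (le_antisymm h1 h2)

theorem reorderCol_perm : ∀ (prev avail : List (Fin n)),
    avail.length ≤ prev.length → (reorderCol n prev avail).Perm avail := by
  intro prev
  induction prev with
  | nil =>
    intro avail h
    have : avail = [] := List.length_eq_zero_iff.mp (Nat.le_zero.mp h)
    subst this
    rfl
  | cons a pr ih =>
    intro avail h
    by_cases he : avail = []
    · simp [reorderCol, he]
    · have hmem := circMin_mem a he
      rw [reorderCol, if_neg he]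
      have hlen : (avail.erase (circMin n a avail)).length ≤ pr.length := by
        rw [List.length_erase_of_mem hmem]
        simp only [List.length_cons] at h
        omega
      exact ((ih _ hlen).cons _).trans (List.perm_cons_erase hmem).symm

theorem reorderCol_length (prev avail : List (Fin n)) (h : avail.length ≤ prev.length) :
    (reorderCol n prev avail).length = avail.length :=
  (reorderCol_perm prev avail h).length_eq

theorem reorderCol_nodup (prev avail : List (Fin n)) (h : avail.length ≤ prev.length)
    (hnd : avail.Nodup) : (reorderCol n prev avail).Nodup :=
  ((reorderCol_perm prev avail h).nodup_iff).mpr hnd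

theorem reorderCol_min : ∀ (prev avail : List (Fin n)),
    avail.length ≤ prev.length → avail.Nodup → ∀ l k : ℕ, l < k → k < avail.length →
    (reorderCol n prev avail).getD l (finOf n 0) = prev.getD l (finOf n 0) ∨
    dd ((reorderCol n prev avail).getD l (finOf n 0)) (prev.getD l (finOf n 0)) <
      dd ((reorderCol n prev avail).getD k (finOf n 0)) (prev.getD l (finOf n 0)) := by
  intro prev
  induction prev with
  | nil =>
    intro avail h hnd l k hlk hk
    have : avail = [] := List.length_eq_zero_iff.mp (Nat.le_zero.mp (by simpa using h))
    subst this; simp at hk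
  | cons a pr ih =>
    intro avail h hnd l k hlk hk
    have he : avail ≠ [] := by
      intro hc; rw [hc] at hk; simp at hk
    set c := circMin n a avail with hc
    have hmem := circMin_mem a he
    have herlen : (avail.erase c).length = avail.length - 1 :=
      List.length_erase_of_mem hmem
    have hlen : (avail.erase c).length ≤ pr.length := by
      simp only [List.length_cons] at h; omega
    rw [reorderCol, if_neg he]
    cases l with
    | zero =>
      simp only [List.getD_cons_zero]
      obtain ⟨k', rfl⟩ : ∃ k', k = k' + 1 := ⟨k - 1, by omega⟩
      simp only [List.getD_cons_succ]
      set y := (reorderCol n pr (avail.erase c)).getD k' (finOf n 0) with hy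
      have hk'lt : k' < (reorderCol n pr (avail.erase c)).length := by
        rw [reorderCol_length _ _ hlen, herlen]; omega
      have hymem : y ∈ avail.erase c := by
        rw [hy, List.getD_eq_getElem _ _ hk'lt]
        exact (reorderCol_perm _ _ hlen).mem_iff.mp (List.getElem_mem hk'lt)
      have hyne : y ≠ c := (hnd.mem_erase_iff.mp hymem).1
      have hyav : y ∈ avail := (hnd.mem_erase_iff.mp hymem).2
      by_cases hca : c = a
      · exact Or.inl hca
      · refine Or.inr ?_
        have hle := circMin_le a he y hyav
        rcases lt_or_eq_of_le hle with hlt | heq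
        · exact hlt
        · exact absurd (dd_inj heq).symm hyne
    | succ l' =>
      obtain ⟨k', rfl⟩ : ∃ k', k = k' + 1 := ⟨k - 1, by omega⟩
      simp only [List.getD_cons_succ]
      exact ih (avail.erase c) hlen (hnd.erase c) l' k' (by omega) (by omega)

theorem reorderCol_ne_prev : ∀ (prev avail : List (Fin n)),
    avail.length ≤ prev.length → avail.Nodup → ∀ j l : ℕ, j < l → l < avail.length →
    (reorderCol n prev avail).getD l (finOf n 0) ≠ prev.getD j (finOf n 0) := by
  intro prev
  induction prev with
  | nil =>
    intro avail h hnd j l hjl hl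
    have : avail = [] := List.length_eq_zero_iff.mp (Nat.le_zero.mp (by simpa using h))
    subst this; simp at hl
  | cons a pr ih =>
    intro avail h hnd j l hjl hl
    have he : avail ≠ [] := by
      intro hc; rw [hc] at hl; simp at hl
    set c := circMin n a avail with hc
    have hmem := circMin_mem a he
    have herlen : (avail.erase c).length = avail.length - 1 :=
      List.length_erase_of_mem hmem
    have hlen : (avail.erase c).length ≤ pr.length := by
      simp only [List.length_cons] at h; omega
    rw [reorderCol, if_neg he]
    obtain ⟨l', rfl⟩ : ∃ l', l = l' + 1 := ⟨l - 1, by omega⟩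
    cases j with
    | zero =>
      simp only [List.getD_cons_succ, List.getD_cons_zero]
      set y := (reorderCol n pr (avail.erase c)).getD l' (finOf n 0) with hy
      have hl'lt : l' < (reorderCol n pr (avail.erase c)).length := by
        rw [reorderCol_length _ _ hlen, herlen]; omega
      have hymem : y ∈ avail.erase c := by
        rw [hy, List.getD_eq_getElem _ _ hl'lt]
        exact (reorderCol_perm _ _ hlen).mem_iff.mp (List.getElem_mem hl'lt)
      by_cases ha : a ∈ avail
      · have hca : c = a := circMin_eq ha (fun y hy => by
          rw [show dd a a = 0 from dd_eq_zero_iff.mpr rfl]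
          exact Nat.zero_le _)
        rw [← hca]
        exact (hnd.mem_erase_iff.mp hymem).1
      · intro hcon
        exact ha (hcon ▸ (hnd.mem_erase_iff.mp hymem).2)
    | succ j' =>
      simp only [List.getD_cons_succ]
      exact ih (avail.erase c) hlen (hnd.erase c) j' l' (by omega) (by omega)

theorem chain'_lt_nodup {L : List (Fin n)} (h : L.Chain' (· < ·)) : L.Nodup :=
  (List.isChain_iff_pairwise.mp h).imp ne_of_lt

theorem chain'_lt_le_getD {L : List (Fin n)} (h : L.Chain' (· < ·)) :
    ∀ i, i < L.length → i ≤ (L.getD i (finOf n 0)).val := by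
  intro i
  induction i with
  | zero => intro _; exact Nat.zero_le _
  | succ i ihi =>
    intro hi
    have h1 := ihi (by omega)
    have h2 := List.isChain_iff_getElem.mp h i (by omega)
    rw [← List.getD_eq_getElem _ (finOf n 0) (by omega : i < L.length),
      ← List.getD_eq_getElem _ (finOf n 0) (by omega : i + 1 < L.length)] at h2
    have h3 : (L.getD i (finOf n 0)).val < (L.getD (i+1) (finOf n 0)).val := h2
    omega

theorem reorderCol_id : ∀ (prev b : List (Fin n)), b.Chain' (· < ·) →
    b.length ≤ prev.length →
    (∀ i, i < b.length → (prev.getD i (finOf n 0)).val ≤ (b.getD i (finOf n 0)).val) →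
    reorderCol n prev b = b := by
  intro prev
  induction prev with
  | nil =>
    intro b _ h _
    have : b = [] := List.length_eq_zero_iff.mp (Nat.le_zero.mp h)
    subst this; rfl
  | cons p pr ih =>
    intro b hch hlen hle
    cases b with
    | nil => simp [reorderCol]
    | cons x bs =>
      rw [reorderCol, if_neg (List.cons_ne_nil x bs)]
      have hpx : p.val ≤ x.val := by
        have := hle 0 (by simp)
        simpa using this
      have hxmin : ∀ y ∈ x :: bs, dd x p ≤ dd y p := by
        intro y hy
        rcases List.mem_cons.mp hy with rfl | hy
        · exact le_refl _
        · have hxy : x < y :=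
            (List.pairwise_cons.mp (List.isChain_iff_pairwise.mp hch)).1 y hy
          have hxyv : x.val < y.val := hxy
          rcases dd_val x p with ⟨u1, u2⟩ | ⟨u1, u2⟩ <;>
            rcases dd_val y p with ⟨v1, v2⟩ | ⟨v1, v2⟩ <;> omega
      have hcx : circMin n p (x :: bs) = x := circMin_eq List.mem_cons_self hxmin
      rw [hcx]
      show (x :: reorderCol n pr ((x :: bs).erase x)) = x :: bs
      rw [List.erase_cons_head]
      congr 1
      refine ih bs hch.tail (by simp only [List.length_cons] at hlen; omega) ?_
      intro i hi
      have := hle (i+1) (by simp only [List.length_cons]; omega)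
      simpa using this

end REORDER


/-! ### The Greedy algorithm: selected roots, stream decomposition, bookkeeping -/

section GREEDY
variable (n : ℕ) [NeZero n]

/-- The list of roots selected by the Greedy algorithm, in order. -/
def selRoots : Perm (Fin n) → List (List (Fin n) × (ℕ × ℕ)) → List (ℕ × ℕ)
  | _, [] => []
  | A, (Ci, p) :: rest =>
    if A (finOf n p.1) ≠ Ci.getD p.1 (finOf n 0) ∧
        circWeakBetween (A (finOf n p.1)) (A (finOf n p.2)) (Ci.getD p.1 (finOf n 0)) then
      p :: selRoots (A * transp n p) rest
    else
      selRoots A rest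

/-- The permutation after the Greedy algorithm has processed the whole stream. -/
def endPerm : Perm (Fin n) → List (List (Fin n) × (ℕ × ℕ)) → Perm (Fin n)
  | A, [] => A
  | A, (Ci, p) :: rest =>
    if A (finOf n p.1) ≠ Ci.getD p.1 (finOf n 0) ∧
        circWeakBetween (A (finOf n p.1)) (A (finOf n p.2)) (Ci.getD p.1 (finOf n 0)) then
      endPerm (A * transp n p) rest
    else
      endPerm A rest

theorem selRoots_append : ∀ (s t : List (List (Fin n) × (ℕ × ℕ))) (A : Perm (Fin n)),
    selRoots n A (s ++ t) = selRoots n A s ++ selRoots n (endPerm n A s) t := by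
  intro s
  induction s with
  | nil => intro t A; rfl
  | cons hd rest ih =>
    intro t A
    obtain ⟨Ci, p⟩ := hd
    by_cases hc : A (finOf n p.1) ≠ Ci.getD p.1 (finOf n 0) ∧
        circWeakBetween (A (finOf n p.1)) (A (finOf n p.2)) (Ci.getD p.1 (finOf n 0))
    · rw [List.cons_append, selRoots, if_pos hc, selRoots, if_pos hc, endPerm, if_pos hc,
        ih, List.cons_append]
    · rw [List.cons_append, selRoots, if_neg hc, selRoots, if_neg hc, endPerm, if_neg hc, ih]

theorem endPerm_append : ∀ (s t : List (List (Fin n) × (ℕ × ℕ))) (A : Perm (Fin n)),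
    endPerm n A (s ++ t) = endPerm n (endPerm n A s) t := by
  intro s
  induction s with
  | nil => intro t A; rfl
  | cons hd rest ih =>
    intro t A
    obtain ⟨Ci, p⟩ := hd
    by_cases hc : A (finOf n p.1) ≠ Ci.getD p.1 (finOf n 0) ∧
        circWeakBetween (A (finOf n p.1)) (A (finOf n p.2)) (Ci.getD p.1 (finOf n 0))
    · rw [List.cons_append, endPerm, if_pos hc, endPerm, if_pos hc, ih]
    · rw [List.cons_append, endPerm, if_neg hc, endPerm, if_neg hc, ih]

/-- Product of the transpositions of a list of roots. -/
def prodT (L : List (ℕ × ℕ)) : Perm (Fin n) := (L.map (transp n)).prod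

theorem isQBGPath_append : ∀ (L M : List (ℕ × ℕ)) (w : Perm (Fin n)),
    isQBGPath n w (L ++ M) ↔ isQBGPath n w L ∧ isQBGPath n (w * prodT n L) M := by
  intro L
  induction L with
  | nil =>
    intro M w
    simp [isQBGPath, prodT]
  | cons p rest ih =>
    intro M w
    rw [List.cons_append]
    show (qbgEdge n w p ∧ isQBGPath n (w * transp n p) (rest ++ M)) ↔ _
    rw [ih]
    unfold prodT
    rw [List.map_cons, List.prod_cons, ← mul_assoc]
    show _ ↔ (qbgEdge n w p ∧ isQBGPath n (w * transp n p) rest) ∧ _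
    rw [and_assoc]

theorem endPerm_eq : ∀ (s : List (List (Fin n) × (ℕ × ℕ))) (A : Perm (Fin n)),
    endPerm n A s = A * prodT n (selRoots n A s) := by
  intro s
  induction s with
  | nil => intro A; simp [endPerm, selRoots, prodT]
  | cons hd rest ih =>
    intro A
    obtain ⟨Ci, p⟩ := hd
    by_cases hc : A (finOf n p.1) ≠ Ci.getD p.1 (finOf n 0) ∧
        circWeakBetween (A (finOf n p.1)) (A (finOf n p.2)) (Ci.getD p.1 (finOf n 0))
    · rw [endPerm, if_pos hc, selRoots, if_pos hc, ih]
      unfold prodT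
      rw [List.map_cons, List.prod_cons, ← mul_assoc]
    · rw [endPerm, if_neg hc, selRoots, if_neg hc, ih]

theorem greedyAux_bounds : ∀ (s : List (List (Fin n) × (ℕ × ℕ))) (A : Perm (Fin n))
    (pos j : ℕ), j ∈ greedyAux n A pos s → pos ≤ j ∧ j < pos + s.length := by
  intro s
  induction s with
  | nil => intro A pos j hj; simp [greedyAux] at hj
  | cons hd rest ih =>
    intro A pos j hj
    obtain ⟨Ci, p⟩ := hd
    by_cases hc : A (finOf n p.1) ≠ Ci.getD p.1 (finOf n 0) ∧
        circWeakBetween (A (finOf n p.1)) (A (finOf n p.2)) (Ci.getD p.1 (finOf n 0))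
    · rw [greedyAux, if_pos hc] at hj
      rcases Finset.mem_insert.mp hj with rfl | hj
      · simp only [List.length_cons]; omega
      · have := ih _ _ _ hj
        simp only [List.length_cons]; omega
    · rw [greedyAux, if_neg hc] at hj
      have := ih _ _ _ hj
      simp only [List.length_cons]; omega

theorem greedyAux_sort_map (ch : List (ℕ × ℕ)) :
    ∀ (s : List (List (Fin n) × (ℕ × ℕ))) (A : Perm (Fin n)) (pos : ℕ),
    (∀ q, q < s.length → (s.getD q ([], (0, 0))).2 = ch.getD (pos + q) (0, 0)) →
    ((greedyAux n A pos s).sort (· ≤ ·)).map (fun j => ch.getD j (0, 0))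
      = selRoots n A s := by
  intro s
  induction s with
  | nil => intro A pos _; simp [greedyAux, selRoots]
  | cons hd rest ih =>
    intro A pos h
    obtain ⟨Ci, p⟩ := hd
    have hp : ch.getD pos (0, 0) = p := by
      have := h 0 (by simp)
      simpa using this.symm
    have hshift : ∀ q, q < rest.length →
        (rest.getD q ([], (0, 0))).2 = ch.getD (pos + 1 + q) (0, 0) := by
      intro q hq
      have := h (q + 1) (by simp only [List.length_cons]; omega)
      rw [List.getD_cons_succ] at this
      rw [this]
      congr 1
      omega
    by_cases hc : A (finOf n p.1) ≠ Ci.getD p.1 (finOf n 0) ∧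
        circWeakBetween (A (finOf n p.1)) (A (finOf n p.2)) (Ci.getD p.1 (finOf n 0))
    · rw [greedyAux, if_pos hc, selRoots, if_pos hc]
      have hnotin : pos ∉ greedyAux n (A * transp n p) (pos + 1) rest := by
        intro hmem
        have := greedyAux_bounds n _ _ _ _ hmem
        omega
      have hall : ∀ b ∈ greedyAux n (A * transp n p) (pos + 1) rest, pos ≤ b := by
        intro b hb
        have := greedyAux_bounds n _ _ _ _ hb
        omega
      rw [Finset.sort_insert _ hall hnotin, List.map_cons, hp, ih _ _ hshift]
    · rw [greedyAux, if_neg hc, selRoots, if_neg hc]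
      exact ih _ _ hshift

/-- Stream of one row of a block: roots `(l, m), (l, m+1), …, (l, n-1)` paired with
column `C`. -/
def rowStream (C : List (Fin n)) (l m : ℕ) : List (List (Fin n) × (ℕ × ℕ)) :=
  (List.range (n - m)).map (fun t => (C, (l, m + t)))

/-- Stream of one block: rows `K-1, K-2, …, 0`. -/
def blockStream (C : List (Fin n)) (K : ℕ) : List (List (Fin n) × (ℕ × ℕ)) :=
  (List.range K).reverse.flatMap (fun r => rowStream n C r K)

theorem blockStream_eq (C : List (Fin n)) (K : ℕ) :
    (GammaK n K).map (fun p => (C, p)) = blockStream n C K := by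
  unfold GammaK blockStream rowStream
  rw [List.map_flatMap]
  exact congrArg (List.flatMap · _) (funext fun i => by rw [List.map_map]; rfl)

/-- The stream built from raw columns, reordering along the way. -/
def colStream : List (Fin n) → List (List (Fin n)) → List ℕ →
    List (List (Fin n) × (ℕ × ℕ))
  | _, _, [] => []
  | _, [], _ :: _ => []
  | P, bcol :: bs, K :: mus =>
      blockStream n (reorderCol n P bcol) K ++ colStream (reorderCol n P bcol) bs mus

theorem greedyStream_cons (K : ℕ) (mus : List ℕ) (C : List (Fin n))
    (Cs : List (List (Fin n))) :
    greedyStream n (K :: mus) (C :: Cs)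
      = (GammaK n K).map (fun p => (C, p)) ++ greedyStream n mus Cs := by
  unfold greedyStream
  rw [List.length_cons, List.range_succ_eq_map, List.flatMap_cons, List.flatMap_map]
  rfl

theorem greedyStream_ordAux : ∀ (bs : List (List (Fin n))) (mus : List ℕ)
    (P : List (Fin n)), bs.length = mus.length →
    greedyStream n mus (ordAux n P bs) = colStream n P bs mus := by
  intro bs
  induction bs with
  | nil =>
    intro mus P h
    have : mus = [] := List.length_eq_zero_iff.mp (h ▸ rfl)
    subst this
    rfl
  | cons bcol bs ih =>
    intro mus P h
    cases mus with
    | nil => simp at h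
    | cons K mus =>
      rw [show ordAux n P (bcol :: bs) = reorderCol n P bcol :: ordAux n (reorderCol n P bcol) bs
        from rfl]
      rw [greedyStream_cons, blockStream_eq, colStream]
      congr 1
      exact ih mus _ (by simpa using h)

theorem colStream_map_snd : ∀ (bs : List (List (Fin n))) (mus : List ℕ)
    (P : List (Fin n)), bs.length = mus.length →
    (colStream n P bs mus).map Prod.snd = lambdaChain n mus := by
  intro bs
  induction bs with
  | nil =>
    intro mus P h
    have : mus = [] := List.length_eq_zero_iff.mp (h ▸ rfl)
    subst this
    rfl
  | cons bcol bs ih =>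
    intro mus P h
    cases mus with
    | nil => simp at h
    | cons K mus =>
      rw [colStream, List.map_append, ← blockStream_eq, List.map_map]
      rw [show lambdaChain n (K :: mus) = GammaK n K ++ lambdaChain n mus from
        List.flatMap_cons .. ]
      congr 1
      · simp
      · exact ih mus _ (by simpa using h)

end GREEDY


/-! ### The row, block, and main lemmas -/

section MAIN
variable {n : ℕ} [NeZero n]

theorem finOf_inj {i j : ℕ} (hi : i < n) (hj : j < n) (h : finOf n i = finOf n j) :
    i = j := by
  have := congrArg Fin.val h
  rwa [finOf_val hi, finOf_val hj] at this

theorem rowStream_succ {C : List (Fin n)} {l m : ℕ} (hm : m < n) :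
    rowStream n C l m = (C, (l, m)) :: rowStream n C l (m + 1) := by
  unfold rowStream
  rw [show n - m = (n - (m + 1)) + 1 from by omega, List.range_succ_eq_map, List.map_cons,
    List.map_map]
  refine congrArg₂ List.cons (by simp) ?_
  refine congrArg (fun f => List.map f (List.range (n - (m + 1)))) ?_
  funext t
  show (C, (l, m + (t + 1))) = (C, (l, m + 1 + t))
  rw [show m + (t + 1) = m + 1 + t from by omega]

theorem rowStream_nil {C : List (Fin n)} {l m : ℕ} (hm : n ≤ m) :
    rowStream n C l m = [] := by
  unfold rowStream
  rw [show n - m = 0 from by omega]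
  rfl

theorem row_lemma (C P : List (Fin n)) (K l : ℕ) (hlK : l < K) (hKC : C.length = K)
    (hmin : ∀ k, l < k → k < K →
      C.getD l (finOf n 0) = P.getD l (finOf n 0) ∨
      dd (C.getD l (finOf n 0)) (P.getD l (finOf n 0)) <
        dd (C.getD k (finOf n 0)) (P.getD l (finOf n 0))) :
    ∀ (t m : ℕ) (A : Perm (Fin n)), n - m = t → K ≤ m → m ≤ n →
    (∀ j, j < l → A (finOf n j) = P.getD j (finOf n 0)) →
    (∀ k, l < k → k < K → A (finOf n k) = C.getD k (finOf n 0)) →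
    dd (A (finOf n l)) (P.getD l (finOf n 0)) ≤
      dd (C.getD l (finOf n 0)) (P.getD l (finOf n 0)) →
    (∀ k, K ≤ k → k < m →
      dd (C.getD l (finOf n 0)) (A (finOf n l)) < dd (A (finOf n k)) (A (finOf n l))) →
    (A (finOf n l) = C.getD l (finOf n 0) ∨
      ∃ q, m ≤ q ∧ q < n ∧ A (finOf n q) = C.getD l (finOf n 0)) →
    isQBGPath n A (selRoots n A (rowStream n C l m)) ∧
    (∀ j, j < l → (endPerm n A (rowStream n C l m)) (finOf n j) = P.getD j (finOf n 0)) ∧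
    (∀ k, l ≤ k → k < K →
      (endPerm n A (rowStream n C l m)) (finOf n k) = C.getD k (finOf n 0)) := by
  intro t
  induction t with
  | zero =>
    intro m A ht hKm hmn inv1 inv2 inv3 inv4 inv5
    have hmeq : n ≤ m := by omega
    rw [rowStream_nil hmeq]
    have hAl : A (finOf n l) = C.getD l (finOf n 0) := by
      rcases inv5 with h | ⟨q, hq1, hq2, _⟩
      · exact h
      · omega
    refine ⟨trivial, inv1, ?_⟩
    intro k hk1 hk2
    rcases Nat.eq_or_lt_of_le hk1 with rfl | hk
    · exact hAl
    · exact inv2 k hk hk2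
  | succ t iht =>
    intro m A ht hKm hmn inv1 inv2 inv3 inv4 inv5
    have hmn' : m < n := by omega
    have hlm : l < m := lt_of_lt_of_le hlK hKm
    have hln : l < n := lt_trans hlm hmn'
    rw [rowStream_succ hmn']
    have hAinj : ∀ i j : ℕ, i < n → j < n → i ≠ j →
        A (finOf n i) ≠ A (finOf n j) := by
      intro i j hi hj hij hcon
      exact hij (finOf_inj hi hj (A.injective hcon))
    by_cases hc : A (finOf n l) ≠ C.getD l (finOf n 0) ∧
        circWeakBetween (A (finOf n l)) (A (finOf n m)) (C.getD l (finOf n 0))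
    · -- selection happens
      obtain ⟨hne, hwb⟩ := hc
      have hd1 : 0 < dd (A (finOf n m)) (A (finOf n l)) := hwb.1
      have hd2 : dd (A (finOf n m)) (A (finOf n l)) ≤
          dd (C.getD l (finOf n 0)) (A (finOf n l)) := hwb.2
      have hclne : C.getD l (finOf n 0) ≠ P.getD l (finOf n 0) ∨ True := Or.inr trivial
      -- the shift along the arc
      have hshift_cl : dd (C.getD l (finOf n 0)) (A (finOf n l)) =
          dd (C.getD l (finOf n 0)) (P.getD l (finOf n 0)) -
          dd (A (finOf n l)) (P.getD l (finOf n 0)) := dd_shift inv3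
      -- Edge of the quantum Bruhat graph
      have hedge : qbgEdge n A (l, m) := by
        apply qbgEdge_of_crit A l m hlm hmn'
        intro k hk1 hk2
        rcases lt_or_ge k K with hkK | hkK
        · rw [inv2 k hk1 hkK]
          rcases hmin k hk1 hkK with heq | hstrict
          · exfalso
            have h0 : dd (C.getD l (finOf n 0)) (P.getD l (finOf n 0)) = 0 :=
              dd_eq_zero_iff.mpr heq
            have h1 : dd (A (finOf n l)) (P.getD l (finOf n 0)) = 0 := by omega
            exact hne ((dd_eq_zero_iff.mp h1).trans heq.symm)
          · have h1 : dd (C.getD k (finOf n 0)) (A (finOf n l)) =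
                dd (C.getD k (finOf n 0)) (P.getD l (finOf n 0)) -
                dd (A (finOf n l)) (P.getD l (finOf n 0)) :=
              dd_shift (le_trans inv3 (le_of_lt hstrict))
            omega
        · exact lt_of_le_of_lt hd2 (inv4 k hkK hk2)
      -- the new permutation
      set A' := A * transp n (l, m) with hA'def
      have hA'l : A' (finOf n l) = A (finOf n m) := by
        rw [hA'def, Equiv.Perm.mul_apply]
        unfold transp
        rw [Equiv.swap_apply_left]
      have hA'm : A' (finOf n m) = A (finOf n l) := by
        rw [hA'def, Equiv.Perm.mul_apply]
        unfold transp
        rw [Equiv.swap_apply_right]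
      have hA'other : ∀ j : ℕ, j < n → j ≠ l → j ≠ m → A' (finOf n j) = A (finOf n j) := by
        intro j hj hjl hjm
        rw [hA'def, Equiv.Perm.mul_apply]
        unfold transp
        rw [Equiv.swap_apply_of_ne_of_ne]
        · intro hcon; exact hjl (finOf_inj hj hln hcon)
        · intro hcon; exact hjm (finOf_inj hj hmn' hcon)
      have hamal : A (finOf n m) ≠ A (finOf n l) :=
        hAinj m l hmn' hln (by omega)
      -- new invariants
      have inv1' : ∀ j, j < l → A' (finOf n j) = P.getD j (finOf n 0) := by
        intro j hj
        rw [hA'other j (by omega) (by omega) (by omega)]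
        exact inv1 j hj
      have inv2' : ∀ k, l < k → k < K → A' (finOf n k) = C.getD k (finOf n 0) := by
        intro k hk1 hk2
        rw [hA'other k (by omega) (by omega) (by omega)]
        exact inv2 k hk1 hk2
      have inv3' : dd (A' (finOf n l)) (P.getD l (finOf n 0)) ≤
          dd (C.getD l (finOf n 0)) (P.getD l (finOf n 0)) := by
        rw [hA'l]
        have hsum : dd (A (finOf n m)) (A (finOf n l)) +
            dd (A (finOf n l)) (P.getD l (finOf n 0)) < n := by
          have := dd_lt (C.getD l (finOf n 0)) (P.getD l (finOf n 0))
          omega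
        have := dd_add hsum
        omega
      have inv4' : ∀ k, K ≤ k → k < m + 1 →
          dd (C.getD l (finOf n 0)) (A' (finOf n l)) <
          dd (A' (finOf n k)) (A' (finOf n l)) := by
        intro k hk1 hk2
        rw [hA'l]
        have hclam : dd (C.getD l (finOf n 0)) (A (finOf n m)) =
            dd (C.getD l (finOf n 0)) (A (finOf n l)) -
            dd (A (finOf n m)) (A (finOf n l)) := dd_shift hd2
        rcases Nat.eq_or_lt_of_le (show k ≤ m from by omega) with rfl | hkm
        · rw [hA'm]
          have hsum := dd_add_dd hamal
          have := dd_lt (C.getD l (finOf n 0)) (A (finOf n l))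
          omega
        · rw [hA'other k (by omega) (by omega) (by omega)]
          have h4 := inv4 k hk1 hkm
          have hshk : dd (A (finOf n k)) (A (finOf n m)) =
              dd (A (finOf n k)) (A (finOf n l)) -
              dd (A (finOf n m)) (A (finOf n l)) :=
            dd_shift (le_trans hd2 (le_of_lt h4))
          omega
      have inv5' : A' (finOf n l) = C.getD l (finOf n 0) ∨
          ∃ q, m + 1 ≤ q ∧ q < n ∧ A' (finOf n q) = C.getD l (finOf n 0) := by
        by_cases ham : A (finOf n m) = C.getD l (finOf n 0)
        · exact Or.inl (hA'l.trans ham)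
        · rcases inv5 with h | ⟨q, hq1, hq2, hq3⟩
          · exact absurd h hne
          · have hqm : q ≠ m := fun h => ham (h ▸ hq3)
            refine Or.inr ⟨q, Nat.lt_of_le_of_ne hq1 (Ne.symm hqm), hq2, ?_⟩
            rw [hA'other q hq2 (lt_of_lt_of_le hlm hq1).ne' hqm]
            exact hq3
      have e1 : n - (m + 1) = t := by simp [Nat.sub_succ, ht]
      have e2 : K ≤ m + 1 := Nat.le_succ_of_le hKm
      have e3 : m + 1 ≤ n := hmn'
      have hrec := iht (m + 1) A' e1 e2 e3 inv1' inv2' inv3' inv4' inv5'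
      rw [selRoots, if_pos ⟨hne, hwb⟩, endPerm, if_pos ⟨hne, hwb⟩]
      exact ⟨⟨hedge, hrec.1⟩, hrec.2.1, hrec.2.2⟩
    · -- no selection
      have inv4' : ∀ k, K ≤ k → k < m + 1 →
          dd (C.getD l (finOf n 0)) (A (finOf n l)) <
          dd (A (finOf n k)) (A (finOf n l)) := by
        intro k hk1 hk2
        rcases Nat.eq_or_lt_of_le (show k ≤ m from by omega) with rfl | hkm
        · have hpos : 0 < dd (A (finOf n k)) (A (finOf n l)) :=
            dd_pos (hAinj k l (by omega) hln (by omega))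
          by_cases hal : A (finOf n l) = C.getD l (finOf n 0)
          · rw [← hal, show dd (A (finOf n l)) (A (finOf n l)) = 0 from
              dd_eq_zero_iff.mpr rfl]
            exact hpos
          · rcases not_and_or.mp hc with h | h
            · exact absurd (not_not.mp h) hal
            · have h2 : ¬ (0 < dd (A (finOf n k)) (A (finOf n l)) ∧
                  dd (A (finOf n k)) (A (finOf n l)) ≤
                  dd (C.getD l (finOf n 0)) (A (finOf n l))) := h
              omega
        · exact inv4 k hk1 hkm
      have inv5' : A (finOf n l) = C.getD l (finOf n 0) ∨
          ∃ q, m + 1 ≤ q ∧ q < n ∧ A (finOf n q) = C.getD l (finOf n 0) := by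
        by_cases hal : A (finOf n l) = C.getD l (finOf n 0)
        · exact Or.inl hal
        · rcases inv5 with h | ⟨q, hq1, hq2, hq3⟩
          · exact Or.inl h
          · rcases Nat.eq_or_lt_of_le hq1 with rfl | hqm
            · exfalso
              apply hc
              refine ⟨hal, ?_, ?_⟩
              · show 0 < dd (A (finOf n m)) (A (finOf n l))
                rw [hq3]
                exact dd_pos (fun h => hal h.symm)
              · show dd (A (finOf n m)) (A (finOf n l)) ≤
                  dd (C.getD l (finOf n 0)) (A (finOf n l))
                rw [hq3]
            · exact Or.inr ⟨q, by omega, hq2, hq3⟩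
      have e1 : n - (m + 1) = t := by simp [Nat.sub_succ, ht]
      have e2 : K ≤ m + 1 := Nat.le_succ_of_le hKm
      have e3 : m + 1 ≤ n := hmn'
      have hrec := iht (m + 1) A e1 e2 e3 inv1 inv2 inv3 inv4' inv5'
      rw [selRoots, if_neg hc, endPerm, if_neg hc]
      exact hrec


theorem block_lemma (C P : List (Fin n)) (K : ℕ) (hKC : C.length = K) (hnd : C.Nodup)
    (hKn : K ≤ n)
    (hne2 : ∀ j lv, j < lv → lv < K →
      C.getD lv (finOf n 0) ≠ P.getD j (finOf n 0))
    (hmin : ∀ lv k, lv < k → k < K →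
      C.getD lv (finOf n 0) = P.getD lv (finOf n 0) ∨
      dd (C.getD lv (finOf n 0)) (P.getD lv (finOf n 0)) <
        dd (C.getD k (finOf n 0)) (P.getD lv (finOf n 0))) :
    ∀ (l : ℕ) (A : Perm (Fin n)), l ≤ K →
    (∀ j, j < l → A (finOf n j) = P.getD j (finOf n 0)) →
    (∀ k, l ≤ k → k < K → A (finOf n k) = C.getD k (finOf n 0)) →
    isQBGPath n A (selRoots n A
      ((List.range l).reverse.flatMap (fun r => rowStream n C r K))) ∧
    (∀ k, k < K → (endPerm n A
      ((List.range l).reverse.flatMap (fun r => rowStream n C r K))) (finOf n k)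
        = C.getD k (finOf n 0)) := by
  intro l
  induction l with
  | zero =>
    intro A _ _ binv2
    simp only [List.range_zero, List.reverse_nil, List.flatMap_nil]
    exact ⟨trivial, fun k hk => binv2 k (Nat.zero_le k) hk⟩
  | succ l ihl =>
    intro A hlK binv1 binv2
    have hlK' : l < K := hlK
    have hstream : (List.range (l+1)).reverse.flatMap (fun r => rowStream n C r K)
        = rowStream n C l K ++
          (List.range l).reverse.flatMap (fun r => rowStream n C r K) := by
      rw [List.range_succ, List.reverse_append, List.reverse_singleton,
        List.singleton_append, List.flatMap_cons]
    rw [hstream]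
    have hAl : A (finOf n l) = P.getD l (finOf n 0) := binv1 l (Nat.lt_succ_self l)
    have inv3 : dd (A (finOf n l)) (P.getD l (finOf n 0)) ≤
        dd (C.getD l (finOf n 0)) (P.getD l (finOf n 0)) := by
      rw [hAl, show dd (P.getD l (finOf n 0)) (P.getD l (finOf n 0)) = 0 from
        dd_eq_zero_iff.mpr rfl]
      exact Nat.zero_le _
    have inv5 : A (finOf n l) = C.getD l (finOf n 0) ∨
        ∃ q, K ≤ q ∧ q < n ∧ A (finOf n q) = C.getD l (finOf n 0) := by
      set v := A.symm (C.getD l (finOf n 0)) with hv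
      have hq : A (finOf n v.val) = C.getD l (finOf n 0) := by
        rw [finOf_val_eq v, hv, Equiv.apply_symm_apply]
      rcases lt_trichotomy v.val l with h | h | h
      · exfalso
        rw [binv1 v.val (by omega)] at hq
        exact hne2 v.val l h hlK' hq.symm
      · left
        rw [h] at hq
        exact hq
      · rcases lt_or_ge v.val K with hvK | hvK
        · exfalso
          rw [binv2 v.val (by omega) hvK] at hq
          have hvlt : v.val < C.length := by omega
          have hllt : l < C.length := by omega
          rw [List.getD_eq_getElem C _ hvlt, List.getD_eq_getElem C _ hllt] at hq
          have := (List.Nodup.getElem_inj_iff hnd).mp hq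
          omega
        · exact Or.inr ⟨v.val, hvK, v.isLt, hq⟩
    have hrow := row_lemma C P K l hlK' hKC (fun k hk1 hk2 => hmin l k hk1 hk2)
      (n - K) K A rfl (le_refl K) hKn
      (fun j hj => binv1 j (by omega)) (fun k hk1 hk2 => binv2 k hk1 hk2)
      inv3 (fun k hk1 hk2 => absurd hk2 (not_lt.mpr hk1)) inv5
    obtain ⟨hpath, he1, he2⟩ := hrow
    have hrest := ihl (endPerm n A (rowStream n C l K)) (by omega) he1
      (fun k hk1 hk2 => he2 k hk1 hk2)
    constructor
    · rw [selRoots_append, isQBGPath_append]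
      refine ⟨hpath, ?_⟩
      rw [← endPerm_eq]
      exact hrest.1
    · intro k hk
      rw [endPerm_append]
      exact hrest.2 k hk

theorem main_lemma : ∀ (bs : List (List (Fin n))) (mus : List ℕ) (P : List (Fin n))
    (A : Perm (Fin n)),
    bs.length = mus.length → mus.Pairwise (· ≥ ·) →
    (∀ i, i < mus.length →
      (bs.getD i []).length = mus.getD i 0 ∧ (bs.getD i []).Chain' (· < ·)) →
    (∀ K, K ∈ mus → K ≤ P.length) →
    P.length ≤ n →
    (∀ j, j < P.length → A (finOf n j) = P.getD j (finOf n 0)) →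
    isQBGPath n A (selRoots n A (colStream n P bs mus)) := by
  intro bs
  induction bs with
  | nil =>
    intro mus P A hlen _ _ _ _ _
    have : mus = [] := List.length_eq_zero_iff.mp (hlen ▸ rfl)
    subst this
    exact trivial
  | cons bcol bs ih =>
    intro mus P A hlen hsort hcols hbound hPn hA
    cases mus with
    | nil => simp at hlen
    | cons K mus =>
      have hb0 := hcols 0 (by simp)
      rw [List.getD_cons_zero, List.getD_cons_zero] at hb0
      obtain ⟨hbK, hch⟩ := hb0
      have hbnd : bcol.Nodup := chain'_lt_nodup hch
      have hKP : K ≤ P.length := hbound K List.mem_cons_self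
      have hlenb : bcol.length ≤ P.length := by omega
      have hClen : (reorderCol n P bcol).length = K := by
        rw [reorderCol_length _ _ hlenb, hbK]
      have hCnd : (reorderCol n P bcol).Nodup := reorderCol_nodup _ _ hlenb hbnd
      have hKn : K ≤ n := le_trans hKP hPn
      have hne2 : ∀ j lv, j < lv → lv < K →
          (reorderCol n P bcol).getD lv (finOf n 0) ≠ P.getD j (finOf n 0) := by
        intro j lv h1 h2
        exact reorderCol_ne_prev P bcol hlenb hbnd j lv h1 (by omega)
      have hmin : ∀ lv k, lv < k → k < K →
          (reorderCol n P bcol).getD lv (finOf n 0) = P.getD lv (finOf n 0) ∨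
          dd ((reorderCol n P bcol).getD lv (finOf n 0)) (P.getD lv (finOf n 0)) <
            dd ((reorderCol n P bcol).getD k (finOf n 0)) (P.getD lv (finOf n 0)) :=
        fun lv k h1 h2 => reorderCol_min P bcol hlenb hbnd lv k h1 (by omega)
      have hblock := block_lemma (reorderCol n P bcol) P K hClen hCnd hKn hne2 hmin K A
        (le_refl K) (fun j hj => hA j (by omega))
        (fun k hk1 hk2 => absurd (lt_of_le_of_lt hk1 hk2) (lt_irrefl K))
      obtain ⟨hpath, hfinal⟩ := hblock
      have hcolstream : colStream n P (bcol :: bs) (K :: mus)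
          = blockStream n (reorderCol n P bcol) K ++
            colStream n (reorderCol n P bcol) bs mus := rfl
      have hblockstream : blockStream n (reorderCol n P bcol) K
          = (List.range K).reverse.flatMap
              (fun r => rowStream n (reorderCol n P bcol) r K) := rfl
      rw [hcolstream, selRoots_append, isQBGPath_append]
      constructor
      · rw [hblockstream]
        exact hpath
      · rw [← endPerm_eq]
        apply ih mus (reorderCol n P bcol)
        · simpa using hlen
        · exact hsort.of_cons
        · intro i hi
          have := hcols (i+1) (by simp only [List.length_cons]; omega)
          simpa using this
        · intro K' hK'
          have hK'K : K ≥ K' := (List.pairwise_cons.mp hsort).1 K' hK'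
          omega
        · omega
        · intro j hj
          rw [hblockstream]
          exact hfinal j (by omega)

theorem finRange_getD {i : ℕ} (hi : i < n) :
    (List.finRange n).getD i (finOf n 0) = finOf n i := by
  rw [List.getD_eq_getElem _ _ (by simpa using hi), List.getElem_finRange]
  exact Fin.ext (by simp [finOf_val hi])

theorem ord_eq_ordAux (b : List (List (Fin n)))
    (h : b ≠ [] → (b.getD 0 []).Chain' (· < ·) ∧ (b.getD 0 []).length ≤ n) :
    ord n b = ordAux n (List.finRange n) b := by
  cases b with
  | nil => rfl
  | cons b1 rest =>
    have h1 := h (by simp)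
    rw [List.getD_cons_zero] at h1
    have hid : reorderCol n (List.finRange n) b1 = b1 := by
      apply reorderCol_id _ _ h1.1 (by simpa using h1.2)
      intro i hi
      rw [finRange_getD (lt_of_lt_of_le hi h1.2), finOf_val (lt_of_lt_of_le hi h1.2)]
      exact chain'_lt_le_getD h1.1 i hi
    rw [show ordAux n (List.finRange n) (b1 :: rest)
      = reorderCol n (List.finRange n) b1
        :: ordAux n (reorderCol n (List.finRange n) b1) rest from rfl, hid]
    rfl

end MAIN

/-- For any column-strict filling `b` of the Young diagram of `λ` with
entries in `{1,…,n}`, the output `greedy(ord(b))` of the Greedy algorithm applied to the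
reordered filling `ord(b)` is an admissible subset of the `λ`-chain `Γ`. -/
theorem greedy_ord_admissible {n : ℕ} [NeZero n] (hn : 2 ≤ n) (mu : List ℕ)
    (hdec : mu.Pairwise (· ≥ ·)) (hmu : ∀ k ∈ mu, 1 ≤ k ∧ k ≤ n - 1)
    (b : List (List (Fin n))) (hb : columnStrict n mu b) :
    admissible n mu (greedy n mu (ord n b)) := by
  obtain ⟨hblen, hcols⟩ := hb
  have hbound_n : ∀ K ∈ mu, K ≤ n := fun K hK => by
    have := (hmu K hK).2
    omega
  have hord : ord n b = ordAux n (List.finRange n) b := by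
    apply ord_eq_ordAux
    intro hbne
    have hmu0 : 0 < mu.length := by
      rw [← hblen]
      exact List.length_pos_iff.mpr hbne
    have h0 := hcols 0 hmu0
    refine ⟨h0.2, ?_⟩
    rw [h0.1]
    apply hbound_n
    cases mu with
    | nil => simp at hmu0
    | cons K mus => exact List.mem_cons_self
  have hstream : greedyStream n mu (ord n b) = colStream n (List.finRange n) b mu := by
    rw [hord]
    exact greedyStream_ordAux n b mu _ hblen
  have hsnd : (colStream n (List.finRange n) b mu).map Prod.snd = lambdaChain n mu :=
    colStream_map_snd n b mu _ hblen
  have hslen : (colStream n (List.finRange n) b mu).length = (lambdaChain n mu).length := by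
    rw [← hsnd, List.length_map]
  unfold admissible greedy
  rw [hstream]
  constructor
  · intro j hj
    have := greedyAux_bounds n _ _ _ _ hj
    omega
  · have hmap := greedyAux_sort_map n (lambdaChain n mu)
      (colStream n (List.finRange n) b mu) 1 0 ?_
    · rw [hmap]
      apply main_lemma b mu (List.finRange n) 1 hblen hdec
      · intro i hi
        exact hcols i hi
      · intro K hK
        rw [List.length_finRange]
        exact hbound_n K hK
      · rw [List.length_finRange]
      · intro j hj
        rw [List.length_finRange] at hj
        rw [Equiv.Perm.one_apply, finRange_getD hj]
    · intro q hq
      rw [Nat.zero_add]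
      have h1 : q < (lambdaChain n mu).length := by omega
      rw [List.getD_eq_getElem _ _ hq, List.getD_eq_getElem _ _ h1]
      calc (colStream n (List.finRange n) b mu)[q].2
          = ((colStream n (List.finRange n) b mu).map Prod.snd)[q]'(by
              rw [List.length_map]; exact hq) := (List.getElem_map _).symm
        _ = (lambdaChain n mu)[q] := List.getElem_of_eq hsnd _
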